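/- arXiv:math/0311529 — 4 statements merged into one kernel-verified Lean document; each statement's English description precedes it below -/
import Mathlib

section
/- Let A be an associative algebra over ℂ with local left units: for every finite subset M ⊆ A there exists e ∈ A with e·a = a for all a ∈ M. Then A is H-unital, i.e., the bar complex B_•(A) with differential β = Σᵢ₌₀ⁿ⁻¹ (−1)ⁱ dᵢ on A^{⊗(n+1)} is acyclic. -/
/- STATEMENT 1: An associative ℂ-algebra with local left units is H-unital,
i.e. its bar complex is acyclic. -/

open scoped TensorProduct
open PiTensorProduct

/-- `n`-chains: the `(n+1)`-fold tensor power of `A`. -/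
abbrev HChains (A : Type*) [AddCommGroup A] [Module ℂ A] (n : ℕ) : Type _ :=
  ⨂[ℂ] _ : Fin (n + 1), A

/-- The `i`-th face `dᵢ(a₀⊗⋯⊗aₙ₊₁) = a₀⊗⋯⊗aᵢaᵢ₊₁⊗⋯⊗aₙ₊₁` on tuples. -/
def dFace {A : Type*} [Mul A] {n : ℕ} (i : ℕ) (a : Fin (n + 2) → A) : Fin (n + 1) → A :=
  fun j => if (j : ℕ) < i then a (Fin.castSucc j)
    else if (j : ℕ) = i then a (Fin.castSucc j) * a j.succ
    else a j.succ

/-- The family `β` is the bar differential: `β = Σᵢ₌₀ⁿ (−1)ⁱ dᵢ` (no cyclic face). -/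
def IsBarDifferential {A : Type*} [NonUnitalRing A] [Module ℂ A]
    (β : ∀ n, HChains A (n + 1) →ₗ[ℂ] HChains A n) : Prop :=
  ∀ (n : ℕ) (a : Fin (n + 2) → A),
    β n (tprod ℂ a) =
      ∑ i ∈ Finset.range (n + 1), ((-1 : ℂ) ^ i) • tprod ℂ (dFace i a)

/-!
Left multiplication of the first tensor factor by `e`, written `x ↦ e·x`, is null-homotopic on
the bar complex via `x ↦ e ⊗ x`: `β (e ⊗ x) = e·x - e ⊗ β x` (and `β (e ⊗ x) = e·x` in
degree `0`). A chain is a finite sum of pure tensors, so a local left unit `e` of their first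
factors satisfies `e·c = c`, and then `β (e ⊗ c) = c` for every cycle `c`.
-/

section Faces

variable {A : Type*} [Mul A]

lemma dFace_zero_cons (e : A) {n : ℕ} (a : Fin (n + 1) → A) :
    dFace 0 (Fin.cons e a) = Fin.cons (e * a 0) (Fin.tail a) := by
  funext j
  induction j using Fin.cases with
  | zero => simp [dFace]
  | succ k => simp [dFace, Fin.tail]

lemma dFace_succ_cons (e : A) {n : ℕ} (i : ℕ) (a : Fin (n + 2) → A) :
    dFace (i + 1) (Fin.cons e a) = Fin.cons e (dFace i a) := by
  funext j
  induction j using Fin.cases with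
  | zero => simp [dFace]
  | succ k =>
    simp only [dFace, Fin.cons_succ, Fin.val_succ]
    rcases lt_trichotomy (k : ℕ) i with h | h | h
    · rw [if_pos (by omega), if_pos h, ← Fin.succ_castSucc, Fin.cons_succ]
    · rw [if_neg (by omega), if_pos (by omega), if_neg (by omega), if_pos h,
        ← Fin.succ_castSucc, Fin.cons_succ]
    · rw [if_neg (by omega), if_neg (by omega), if_neg (by omega), if_neg (by omega)]

end Faces

section Homotopy

noncomputable def consLeft {A : Type*} [AddCommGroup A] [Module ℂ A] (e : A) (n : ℕ) :
    HChains A n →ₗ[ℂ] HChains A (n + 1) :=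
  lift
    { toFun := fun a => PiTensorProduct.tprod ℂ (Fin.cons e a)
      map_update_add' := by
        intro inst a i x y
        obtain rfl := Subsingleton.elim inst (instDecidableEqFin _)
        simp [Fin.cons_update]
      map_update_smul' := by
        intro inst a i c x
        obtain rfl := Subsingleton.elim inst (instDecidableEqFin _)
        simp [Fin.cons_update] }

@[simp] lemma consLeft_tprod {A : Type*} [AddCommGroup A] [Module ℂ A] (e : A) (n : ℕ)
    (a : Fin (n + 1) → A) :
    consLeft e n (tprod ℂ a) = PiTensorProduct.tprod ℂ (Fin.cons e a) :=
  lift.tprod _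

variable {A : Type*} [NonUnitalRing A] [Module ℂ A] [SMulCommClass ℂ A A]

noncomputable def mulFirst (e : A) (n : ℕ) : HChains A n →ₗ[ℂ] HChains A n :=
  map (Fin.cases (LinearMap.mulLeft ℂ e) fun _ => LinearMap.id)

lemma mulFirst_tprod (e : A) (n : ℕ) (a : Fin (n + 1) → A) :
    mulFirst e n (tprod ℂ a) = PiTensorProduct.tprod ℂ (Fin.cons (e * a 0) (Fin.tail a)) := by
  rw [mulFirst, map_tprod]
  congr 1
  funext i
  induction i using Fin.cases <;> simp [Fin.tail]

lemma IsBarDifferential.apply_consLeft_zero {β : ∀ n, HChains A (n + 1) →ₗ[ℂ] HChains A n}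
    (hβ : IsBarDifferential β) (e : A) (x : HChains A 0) :
    β 0 (consLeft e 0 x) = mulFirst e 0 x := by
  induction x using PiTensorProduct.induction_on with
  | smul_tprod r a =>
    rw [map_smul, map_smul, map_smul, consLeft_tprod, hβ, Finset.sum_range_one,
      pow_zero, one_smul, dFace_zero_cons, mulFirst_tprod]
  | add x y hx hy => simp only [map_add, hx, hy]

lemma IsBarDifferential.apply_consLeft {β : ∀ n, HChains A (n + 1) →ₗ[ℂ] HChains A n}
    (hβ : IsBarDifferential β) (e : A) (n : ℕ) (x : HChains A (n + 1)) :
    β (n + 1) (consLeft e (n + 1) x) = mulFirst e (n + 1) x - consLeft e n (β n x) := by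
  induction x using PiTensorProduct.induction_on with
  | smul_tprod r a =>
    rw [map_smul, map_smul, map_smul, map_smul, consLeft_tprod, map_smul, ← smul_sub]
    congr 1
    rw [hβ, hβ, Finset.sum_range_succ', map_sum]
    simp only [dFace_succ_cons, dFace_zero_cons, pow_succ, pow_zero, one_smul, map_smul,
      consLeft_tprod, mulFirst_tprod, mul_neg_one, neg_smul, Finset.sum_neg_distrib]
    rw [neg_add_eq_sub]
  | add x y hx hy =>
    simp only [map_add, hx, hy]
    abel

lemma exists_mulFirst_eq_self_of_local_left_units
    (hloc : ∀ M : Finset A, ∃ e : A, ∀ a ∈ M, e * a = a) (n : ℕ) (x : HChains A n) :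
    ∃ e : A, mulFirst e n x = x := by
  classical
  suffices ∃ s : Finset A, ∀ e : A, (∀ a ∈ s, e * a = a) → mulFirst e n x = x by
    obtain ⟨s, hs⟩ := this
    obtain ⟨e, he⟩ := hloc s
    exact ⟨e, hs e he⟩
  induction x using PiTensorProduct.induction_on with
  | smul_tprod r a =>
    refine ⟨{a 0}, fun e he => ?_⟩
    rw [map_smul, mulFirst_tprod, he (a 0) (Finset.mem_singleton_self _), Fin.cons_self_tail]
  | add x y hx hy =>
    obtain ⟨s, hs⟩ := hx
    obtain ⟨t, ht⟩ := hy
    refine ⟨s ∪ t, fun e he => ?_⟩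
    rw [map_add, hs e fun a ha => he a (Finset.mem_union_left _ ha),
      ht e fun a ha => he a (Finset.mem_union_right _ ha)]

end Homotopy

theorem hUnital_of_local_left_units_general
    {A : Type*} [NonUnitalRing A] [Module ℂ A] [SMulCommClass ℂ A A]
    -- local left units: every finite subset M has a local left unit e
    (hloc : ∀ M : Finset A, ∃ e : A, ∀ a ∈ M, e * a = a)
    (β : ∀ n, HChains A (n + 1) →ₗ[ℂ] HChains A n) (hβ : IsBarDifferential β) :
    -- the bar complex is acyclic: exactness at A …
    (∀ c : HChains A 0, ∃ b : HChains A 1, β 0 b = c) ∧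
    -- … and in every higher degree every β-cycle is a β-boundary
    (∀ (n : ℕ) (c : HChains A (n + 1)), β n c = 0 → ∃ b : HChains A (n + 2), β (n + 1) b = c) := by
  constructor
  · intro c
    obtain ⟨e, he⟩ := exists_mulFirst_eq_self_of_local_left_units hloc 0 c
    exact ⟨consLeft e 0 c, by rw [hβ.apply_consLeft_zero, he]⟩
  · intro n c hc
    obtain ⟨e, he⟩ := exists_mulFirst_eq_self_of_local_left_units hloc (n + 1) c
    exact ⟨consLeft e (n + 1) c, by rw [hβ.apply_consLeft, hc, map_zero, sub_zero, he]⟩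

theorem hUnital_of_local_left_units
    {A : Type*} [NonUnitalRing A] [Module ℂ A] [IsScalarTower ℂ A A] [SMulCommClass ℂ A A]
    -- local left units: every finite subset M has a local left unit e
    (hloc : ∀ M : Finset A, ∃ e : A, ∀ a ∈ M, e * a = a)
    (β : ∀ n, HChains A (n + 1) →ₗ[ℂ] HChains A n) (hβ : IsBarDifferential β) :
    -- the bar complex is acyclic: exactness at A …
    (∀ c : HChains A 0, ∃ b : HChains A 1, β 0 b = c) ∧
    -- … and in every higher degree every β-cycle is a β-boundary
    (∀ (n : ℕ) (c : HChains A (n + 1)), β n c = 0 → ∃ b : HChains A (n + 2), β (n + 1) b = c) :=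
  hUnital_of_local_left_units_general hloc β hβ
end

section
/- Let 𝔅 be a unital Banach algebra, h ∈ 𝔅, and for t ∈ ℝ define the bounded chain map α_t on the bounded Hochschild complex by α_t(a₀ ⊗̂ ⋯ ⊗̂ aₙ) = e^{th}a₀e^{−th} ⊗̂ ⋯ ⊗̂ e^{th}aₙe^{−th}. Then for every chain τ, t ↦ α_t(τ) is differentiable with d/dt α_t(τ) = α_t(Γ_h(τ)), where Γ_h(a₀⊗⋯⊗aₙ) = Σᵢ a₀⊗⋯⊗[h,aᵢ]⊗⋯⊗aₙ. -/
/-!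
On an elementary tensor, `α_t` conjugates every factor by `e^{th}`, and
`d/dt (e^{th} a e^{-th}) = [h, e^{th} a e^{-th}] = e^{th} [h, a] e^{-th}`; the Leibniz rule for
multilinear maps gives the formula there, and linearity on the span of elementary tensors.
By the mean value theorem on this dense span, the local bound on `‖α_t‖` makes `t ↦ α_t`
Lipschitz in operator norm on bounded intervals. Hence the difference quotients of
`t ↦ α_t τ` are equi-Lipschitz in `τ`, and their convergence on the dense span extends to every
chain.
-/

open Filter Topology NormedSpace

theorem tendsto_apply_of_dense_of_lipschitzWith {ι X Y : Type*} [PseudoMetricSpace X]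
    [PseudoMetricSpace Y] {l : Filter ι} {F : ι → X → Y} {g : X → Y} {K : NNReal} {s : Set X}
    (hF : ∀ᶠ i in l, LipschitzWith K (F i)) (hg : Continuous g) (hs : Dense s)
    (hlim : ∀ y ∈ s, Tendsto (F · y) l (𝓝 (g y))) (x : X) : Tendsto (F · x) l (𝓝 (g x)) := by
  rw [Metric.tendsto_nhds]
  intro ε hε
  obtain ⟨δ, hδ, hgδ⟩ := Metric.continuous_iff.1 hg x (ε / 3) (by positivity)
  obtain ⟨y, hys, hxy⟩ := hs.exists_dist_lt x (lt_min hδ (by positivity : 0 < ε / 3 / (K + 1)))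
  have hKxy : K * dist x y < ε / 3 :=
    calc (K : ℝ) * dist x y ≤ (K + 1) * dist x y := by gcongr; linarith
      _ < (K + 1) * (ε / 3 / (K + 1)) := by gcongr; exact hxy.trans_le (min_le_right _ _)
      _ = ε / 3 := by field_simp
  filter_upwards [hF, Metric.tendsto_nhds.1 (hlim y hys) (ε / 3) (by positivity)] with i hKi hi
  calc dist (F i x) (g x) ≤ dist (F i x) (F i y) + dist (F i y) (g y) + dist (g y) (g x) :=
        dist_triangle4 _ _ _ _
    _ < ε / 3 + ε / 3 + ε / 3 := by
        gcongr
        · exact (hKi.dist_le_mul x y).trans_lt hKxy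
        · exact hgδ y (dist_comm x y ▸ hxy.trans_le (min_le_left _ _))
    _ = ε := by ring

section OperatorFamily

variable {𝕜 E F : Type*} [NontriviallyNormedField 𝕜] [NormedAddCommGroup E] [NormedSpace 𝕜 E]
  [NormedAddCommGroup F] [NormedSpace 𝕜 F] [NormedSpace ℝ F]
  {A : ℝ → E →L[𝕜] F} {G : E →L[𝕜] E}

theorem hasDerivAt_apply_of_mem_span [SMulCommClass ℝ 𝕜 F] {s : Set E}
    (hs : ∀ x ∈ s, ∀ t, HasDerivAt (A · x) (A t (G x)) t) {x : E}
    (hx : x ∈ Submodule.span 𝕜 s) (t : ℝ) : HasDerivAt (A · x) (A t (G x)) t := by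
  induction hx using Submodule.span_induction generalizing t with
  | mem x hx => exact hs x hx t
  | zero => simpa only [map_zero] using hasDerivAt_const t (0 : F)
  | add x y _ _ hx hy => simpa only [map_add] using (hx t).fun_add (hy t)
  | smul c x _ hx => simpa only [map_smul] using (hx t).fun_const_smul c

theorem norm_sub_le_of_hasDerivAt_apply {s : Set E} (hs : Dense s)
    (hderiv : ∀ x ∈ s, ∀ t, HasDerivAt (A · x) (A t (G x)) t) {M t u : ℝ}
    (hM : ∀ r ∈ Set.uIcc t u, ‖A r‖ ≤ M) : ‖A u - A t‖ ≤ M * ‖G‖ * |u - t| := by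
  have hM0 : 0 ≤ M := (norm_nonneg _).trans (hM t Set.left_mem_uIcc)
  refine (A u - A t).opNorm_le_bound (by positivity) fun x => ?_
  induction x using hs.induction with
  | mem x hx =>
    have hbound : ∀ r ∈ Set.uIcc t u, ‖A r (G x)‖ ≤ M * ‖G‖ * ‖x‖ := fun r hr =>
      calc ‖A r (G x)‖ ≤ M * ‖G x‖ := (A r).le_of_opNorm_le (hM r hr) _
        _ ≤ M * (‖G‖ * ‖x‖) := by gcongr; exact G.le_opNorm x
        _ = M * ‖G‖ * ‖x‖ := by ring
    have hmvt := (convex_uIcc t u).norm_image_sub_le_of_norm_hasDerivWithin_le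
      (fun r _ => (hderiv x hx r).hasDerivWithinAt) hbound Set.left_mem_uIcc Set.right_mem_uIcc
    rw [Real.norm_eq_abs] at hmvt
    simpa only [sub_apply, mul_right_comm _ ‖x‖] using hmvt
  | isClosed =>
    exact isClosed_le ((A u - A t).continuous.norm) (continuous_const.mul continuous_norm)

theorem hasDerivAt_apply_of_dense {s : Set E} (hs : Dense s)
    (hderiv : ∀ x ∈ s, ∀ t, HasDerivAt (A · x) (A t (G x)) t)
    (hbound : ∀ r : ℝ, ∃ M : ℝ, ∀ t : ℝ, |t| ≤ r → ‖A t‖ ≤ M) (x : E) (t : ℝ) :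
    HasDerivAt (A · x) (A t (G x)) t := by
  obtain ⟨M, hM⟩ := hbound (|t| + 1)
  have hGM : 0 ≤ M * ‖G‖ := mul_nonneg ((norm_nonneg _).trans (hM t (by linarith))) (norm_nonneg _)
  have hslope : ∀ u ∈ Metric.ball t 1,
      LipschitzWith (Real.toNNReal (M * ‖G‖)) (fun y => slope (A · y) t u) := by
    intro u hu
    refine LipschitzWith.of_dist_le' fun y z => ?_
    have hAu : ‖A u - A t‖ ≤ M * ‖G‖ * |u - t| := norm_sub_le_of_hasDerivAt_apply hs hderiv
      fun r hr => hM r (by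
        have := (Set.abs_sub_left_of_mem_uIcc hr).trans
          (Real.dist_eq u t ▸ (Metric.mem_ball.1 hu).le)
        linarith [abs_sub_abs_le_abs_sub r t])
    rw [dist_eq_norm, dist_eq_norm, slope_def_module, slope_def_module, ← smul_sub, norm_smul,
      norm_inv, Real.norm_eq_abs]
    have hsub : A u y - A t y - (A u z - A t z) = (A u - A t) (y - z) := by
      simp only [sub_apply, map_sub]
    rw [hsub]
    rcases eq_or_ne u t with rfl | hut
    · simpa using mul_nonneg hGM (norm_nonneg _)
    calc |u - t|⁻¹ * ‖(A u - A t) (y - z)‖ ≤ |u - t|⁻¹ * (M * ‖G‖ * |u - t| * ‖y - z‖) := by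
          gcongr; exact (A u - A t).le_of_opNorm_le hAu _
      _ = M * ‖G‖ * ‖y - z‖ := by field_simp
  rw [hasDerivAt_iff_tendsto_slope]
  exact tendsto_apply_of_dense_of_lipschitzWith
    (eventually_of_mem (mem_nhdsWithin_of_mem_nhds (Metric.ball_mem_nhds t one_pos)) hslope)
    ((A t).continuous.comp G.continuous) hs (fun y hy => (hderiv y hy t).tendsto_slope) x

end OperatorFamily

theorem mul_commutator_mul_of_commute {R : Type*} [Ring R] {h u v : R} (hu : Commute h u)
    (hv : Commute h v) (a : R) : u * (h * a - a * h) * v = h * (u * a * v) - u * a * v * h :=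
  calc u * (h * a - a * h) * v = u * h * a * v - u * a * (h * v) := by noncomm_ring
    _ = h * u * a * v - u * a * (v * h) := by rw [← hu.eq, hv.eq]
    _ = h * (u * a * v) - u * a * v * h := by noncomm_ring

section ExpConj

variable {𝕂 B : Type*} [RCLike 𝕂] [NormedRing B] [NormedAlgebra 𝕂 B]

noncomputable def expConj (h : B) (t : 𝕂) (a : B) : B := exp (t • h) * a * exp (-(t • h))

theorem expConj_commutator (h a : B) (t : 𝕂) :
    expConj h t (h * a - a * h) = h * expConj h t a - expConj h t a * h := by
  have hc : Commute h (t • h) := (Commute.refl h).smul_right t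
  exact mul_commutator_mul_of_commute hc.exp_right hc.neg_right.exp_right a

theorem hasDerivAt_expConj [CompleteSpace B] (h a : B) (t : 𝕂) :
    HasDerivAt (fun u => expConj h u a) (h * expConj h t a - expConj h t a * h) t := by
  have hexp : HasDerivAt (fun u : 𝕂 => exp (u • h)) (h * exp (t • h)) t :=
    hasDerivAt_exp_smul_const' h t
  have hexp_neg : HasDerivAt (fun u : 𝕂 => exp (-(u • h))) (exp (-(t • h)) * -h) t := by
    simpa only [smul_neg] using hasDerivAt_exp_smul_const (-h) t
  refine ((hexp.mul_const a).mul hexp_neg).congr_deriv ?_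
  simp only [expConj]
  noncomm_ring

end ExpConj

theorem HasDerivAt.multilinear_comp {𝕜 ι F : Type*} [NontriviallyNormedField 𝕜] [Fintype ι]
    [DecidableEq ι] {E : ι → Type*} [∀ i, NormedAddCommGroup (E i)] [∀ i, NormedSpace 𝕜 (E i)]
    [NormedAddCommGroup F] [NormedSpace 𝕜 F] (f : ContinuousMultilinearMap 𝕜 E F)
    {g : ∀ i, 𝕜 → E i} {g' : ∀ i, E i} {t : 𝕜} (hg : ∀ i, HasDerivAt (g i) (g' i) t) :
    HasDerivAt (fun u => f (fun i => g i u))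
      (∑ i, f (Function.update (fun j => g j t) i (g' i))) t := by
  convert (HasFDerivAt.multilinear_comp f fun i => (hg i).hasFDerivAt).hasDerivAt using 1
  simp

theorem hasDerivAt_multilinear_expConj {𝕂 B ι F : Type*} [RCLike 𝕂] [NormedRing B]
    [NormedAlgebra 𝕂 B] [CompleteSpace B] [Fintype ι] [DecidableEq ι] [NormedAddCommGroup F]
    [NormedSpace 𝕂 F] (f : ContinuousMultilinearMap 𝕂 (fun _ : ι => B) F) (h : B) (a : ι → B)
    (t : 𝕂) :
    HasDerivAt (fun u => f (fun i => expConj h u (a i)))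
      (∑ i, f (fun j => expConj h t (Function.update a i (h * a i - a i * h) j))) t := by
  refine (HasDerivAt.multilinear_comp f fun i => hasDerivAt_expConj h (a i) t).congr_deriv
    (Finset.sum_congr rfl fun i _ => congrArg f (funext fun j => ?_))
  rw [Function.apply_update (fun _ => expConj h t), expConj_commutator]

theorem deriv_of_conjugation_chain_map_general
    {B : Type*} [NormedRing B] [NormedAlgebra ℂ B] [CompleteSpace B] (h : B)
    -- the bounded Hochschild chain spaces 𝔅^{⊗̂(n+1)}
    (C : ℕ → Type*) [∀ n, NormedAddCommGroup (C n)] [∀ n, NormedSpace ℂ (C n)]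
    -- elementary tensors, spanning a dense subspace
    (tp : ∀ n, ContinuousMultilinearMap ℂ (fun _ : Fin (n + 1) => B) (C n))
    (hdense : ∀ n, Dense (Submodule.span ℂ (Set.range (tp n)) : Set (C n)))
    -- α_t conjugates each tensor factor by e^{th}
    (α : ℝ → ∀ n, C n →L[ℂ] C n)
    (hα : ∀ (t : ℝ) (n : ℕ) (a : Fin (n + 1) → B),
      α t n (tp n a) =
        tp n (fun i => NormedSpace.exp (t • h) * a i * NormedSpace.exp (-(t • h))))
    -- the norms ‖α_t‖ are locally uniformly bounded
    (hbound : ∀ r : ℝ, ∃ M : ℝ, ∀ t : ℝ, |t| ≤ r → ∀ n, ‖α t n‖ ≤ M)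
    -- Γ_h(a₀⊗⋯⊗aₙ) = Σᵢ a₀⊗⋯⊗[h,aᵢ]⊗⋯⊗aₙ
    (Γ : ∀ n, C n →L[ℂ] C n)
    (hΓ : ∀ (n : ℕ) (a : Fin (n + 1) → B),
      Γ n (tp n a) =
        ∑ i : Fin (n + 1), tp n (Function.update a i (h * a i - a i * h))) :
    ∀ (n : ℕ) (τ : C n) (t : ℝ),
      HasDerivAt (fun u : ℝ => α u n τ) (α t n (Γ n τ)) t := by
  intro n
  have htensor : ∀ x ∈ Set.range (tp n), ∀ t, HasDerivAt (α · n x) (α t n (Γ n x)) t := by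
    rintro _ ⟨a, rfl⟩ t
    simp only [hα, hΓ, map_sum]
    exact hasDerivAt_multilinear_expConj ((tp n).restrictScalars ℝ) h a t
  exact hasDerivAt_apply_of_dense (hdense n)
    (fun x hx => hasDerivAt_apply_of_mem_span htensor hx)
    (fun r => (hbound r).imp fun M hM t ht => hM t ht n)

theorem deriv_of_conjugation_chain_map
    {B : Type*} [NormedRing B] [NormedAlgebra ℂ B] [CompleteSpace B] (h : B)
    -- the bounded Hochschild chain spaces 𝔅^{⊗̂(n+1)}
    (C : ℕ → Type*) [∀ n, NormedAddCommGroup (C n)] [∀ n, NormedSpace ℂ (C n)]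
    [∀ n, CompleteSpace (C n)]
    -- elementary tensors, spanning a dense subspace
    (tp : ∀ n, ContinuousMultilinearMap ℂ (fun _ : Fin (n + 1) => B) (C n))
    (hdense : ∀ n, Dense (Submodule.span ℂ (Set.range (tp n)) : Set (C n)))
    -- α_t conjugates each tensor factor by e^{th}
    (α : ℝ → ∀ n, C n →L[ℂ] C n)
    (hα : ∀ (t : ℝ) (n : ℕ) (a : Fin (n + 1) → B),
      α t n (tp n a) =
        tp n (fun i => NormedSpace.exp (t • h) * a i * NormedSpace.exp (-(t • h))))
    -- the norms ‖α_t‖ are locally uniformly bounded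
    (hbound : ∀ r : ℝ, ∃ M : ℝ, ∀ t : ℝ, |t| ≤ r → ∀ n, ‖α t n‖ ≤ M)
    -- Γ_h(a₀⊗⋯⊗aₙ) = Σᵢ a₀⊗⋯⊗[h,aᵢ]⊗⋯⊗aₙ
    (Γ : ∀ n, C n →L[ℂ] C n)
    (hΓ : ∀ (n : ℕ) (a : Fin (n + 1) → B),
      Γ n (tp n a) =
        ∑ i : Fin (n + 1), tp n (Function.update a i (h * a i - a i * h))) :
    ∀ (n : ℕ) (τ : C n) (t : ℝ),
      HasDerivAt (fun u : ℝ => α u n τ) (α t n (Γ n τ)) t :=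
  deriv_of_conjugation_chain_map_general h C tp hdense α hα hbound Γ hΓ
end

section
/- Let X be a Banach space, 1 ≤ p < ∞, and let A_∞ be the algebra of finite-rank operators on ℓ_p(X) spanned by the elementary operators E_{ij}(x ⊗ x*) (the rank-one operator placing x ⊗ x* in matrix position (i,j)). Fix e ∈ X, e* ∈ X* with e*(e) = 1. Then the linear map s: A_∞ → A_∞ ⊗ A_∞ determined by s(E_{ij}(x ⊗ x*)) = E_{i1}(x ⊗ e*) ⊗ E_{1j}(e ⊗ x*) is a well-defined A_∞-bimodule left inverse of the multiplication map, i.e., μ ∘ s = id and s(ab) = a·s(b) = s(a)·b. -/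
/-!
Over a field, `g ⊗ v ↦ g.smulRight v` embeds `E* ⊗ E` into the operators on `E`, so a
finite-rank operator `T = ∑ₖ gₖ.smulRight vₖ` determines its tensor, and
`s T = ∑ₖ φ.smulRight vₖ ⊗ gₖ.smulRight u` is well defined (here `φ = e* ∘ ev₀`, `u = δ₀ e`,
and `s (E i j x f) = E i 0 x e* ⊗ E 0 j e f`). Multiplying the two factors back gives
`φ u • T = T`. Composing `T` with an operator `A` on the left changes only the `vₖ`, which
`s` places in the left factor; composing on the right changes only the `gₖ`, which `s` places
in the right factor. This gives both bimodule identities.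
-/

open scoped ENNReal TensorProduct

namespace ContinuousLinearMap

variable {𝕜 E F G : Type*} [NontriviallyNormedField 𝕜]
  [SeminormedAddCommGroup E] [NormedSpace 𝕜 E]
  [SeminormedAddCommGroup F] [NormedSpace 𝕜 F]
  [SeminormedAddCommGroup G] [NormedSpace 𝕜 G]

variable (𝕜 E F) in
noncomputable def strongDualTensorHom : StrongDual 𝕜 E ⊗[𝕜] F →ₗ[𝕜] (E →L[𝕜] F) :=
  TensorProduct.lift (smulRightL 𝕜 E F).toLinearMap₁₂

@[simp]
lemma strongDualTensorHom_tmul (g : StrongDual 𝕜 E) (v : F) :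
    strongDualTensorHom 𝕜 E F (g ⊗ₜ v) = g.smulRight v := rfl

theorem strongDualTensorHom_injective : Function.Injective (strongDualTensorHom 𝕜 E F) := by
  rw [injective_iff_map_eq_zero]
  intro t ht
  let b := Module.Basis.ofVectorSpace 𝕜 F
  obtain ⟨c, rfl⟩ := TensorProduct.eq_repr_basis_right b t
  suffices c = 0 by simp [this]
  ext i ξ
  have hξ : Finsupp.linearCombination 𝕜 b (c.mapRange (· ξ) (zero_apply ξ)) = 0 := by
    rw [Finsupp.linearCombination_apply, Finsupp.sum_mapRange_index fun i ↦ zero_smul 𝕜 (b i)]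
    simpa [Finsupp.sum, map_sum] using congr($ht ξ)
  simpa using congr($(linearIndependent_iff.mp b.linearIndependent _ hξ) i)

lemma comp_strongDualTensorHom (A : F →L[𝕜] G) (t : StrongDual 𝕜 E ⊗[𝕜] F) :
    A ∘L strongDualTensorHom 𝕜 E F t =
      strongDualTensorHom 𝕜 E G ((A : F →ₗ[𝕜] G).lTensor (StrongDual 𝕜 E) t) := by
  induction t with
  | zero => simp
  | tmul g v => ext; simp
  | add t₁ t₂ h₁ h₂ => simp [comp_add, h₁, h₂]

lemma strongDualTensorHom_comp (A : G →L[𝕜] E) (t : StrongDual 𝕜 E ⊗[𝕜] F) :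
    strongDualTensorHom 𝕜 E F t ∘L A =
      strongDualTensorHom 𝕜 G F (((precomp 𝕜 A : StrongDual 𝕜 E →L[𝕜] StrongDual 𝕜 G) :
        StrongDual 𝕜 E →ₗ[𝕜] StrongDual 𝕜 G).rTensor F t) := by
  induction t with
  | zero => simp
  | tmul g v => ext; simp
  | add t₁ t₂ h₁ h₂ => simp [add_comp, h₁, h₂]

section Splitting

variable (φ : StrongDual 𝕜 E) (u : E)

noncomputable def splitTensor :
    StrongDual 𝕜 E ⊗[𝕜] E →ₗ[𝕜] (E →L[𝕜] E) ⊗[𝕜] (E →L[𝕜] E) :=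
  TensorProduct.map (smulRightL 𝕜 E E φ : E →ₗ[𝕜] E →L[𝕜] E)
      ((smulRightL 𝕜 E E).flip u : StrongDual 𝕜 E →ₗ[𝕜] E →L[𝕜] E) ∘ₗ
    TensorProduct.comm 𝕜 (StrongDual 𝕜 E) E

@[simp]
lemma splitTensor_tmul (g : StrongDual 𝕜 E) (v : E) :
    splitTensor φ u (g ⊗ₜ v) = φ.smulRight v ⊗ₜ g.smulRight u := rfl

lemma mul'_splitTensor (t : StrongDual 𝕜 E ⊗[𝕜] E) :
    LinearMap.mul' 𝕜 (E →L[𝕜] E) (splitTensor φ u t) = φ u • strongDualTensorHom 𝕜 E E t := by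
  induction t with
  | zero => simp
  | tmul g v => ext; simp [smul_smul, mul_comm]
  | add t₁ t₂ h₁ h₂ => simp [h₁, h₂]

lemma splitTensor_lTensor (A : E →L[𝕜] E) (t : StrongDual 𝕜 E ⊗[𝕜] E) :
    splitTensor φ u ((A : E →ₗ[𝕜] E).lTensor (StrongDual 𝕜 E) t) =
      TensorProduct.map (LinearMap.mulLeft 𝕜 A) LinearMap.id (splitTensor φ u t) := by
  induction t with
  | zero => simp
  | tmul g v =>
    simp only [LinearMap.lTensor_tmul, splitTensor_tmul, TensorProduct.map_tmul]
    congr 1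
    ext; simp
  | add t₁ t₂ h₁ h₂ => simp [h₁, h₂]

lemma splitTensor_rTensor (A : E →L[𝕜] E) (t : StrongDual 𝕜 E ⊗[𝕜] E) :
    splitTensor φ u (((precomp 𝕜 A : StrongDual 𝕜 E →L[𝕜] StrongDual 𝕜 E) :
        StrongDual 𝕜 E →ₗ[𝕜] StrongDual 𝕜 E).rTensor E t) =
      TensorProduct.map LinearMap.id (LinearMap.mulRight 𝕜 A) (splitTensor φ u t) := by
  induction t with
  | zero => simp
  | tmul g v =>
    simp only [LinearMap.rTensor_tmul, splitTensor_tmul, TensorProduct.map_tmul]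
    congr 1
  | add t₁ t₂ h₁ h₂ => simp [h₁, h₂]

noncomputable def splitting :
    LinearMap.range (strongDualTensorHom 𝕜 E E) →ₗ[𝕜] (E →L[𝕜] E) ⊗[𝕜] (E →L[𝕜] E) :=
  splitTensor φ u ∘ₗ (LinearEquiv.ofInjective _ strongDualTensorHom_injective).symm.toLinearMap

lemma splitting_apply (T : LinearMap.range (strongDualTensorHom 𝕜 E E))
    (t : StrongDual 𝕜 E ⊗[𝕜] E) (ht : strongDualTensorHom 𝕜 E E t = T) :
    splitting φ u T = splitTensor φ u t := by
  have : (LinearEquiv.ofInjective _ strongDualTensorHom_injective).symm T = t :=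
    (LinearEquiv.symm_apply_eq _).mpr (Subtype.ext ht.symm)
  simp [splitting, this]

lemma mul'_splitting (T : LinearMap.range (strongDualTensorHom 𝕜 E E)) :
    LinearMap.mul' 𝕜 (E →L[𝕜] E) (splitting φ u T) = φ u • (T : E →L[𝕜] E) := by
  obtain ⟨_, t, rfl⟩ := T
  rw [splitting_apply φ u _ t rfl, mul'_splitTensor]

lemma splitting_mul_left (A : E →L[𝕜] E) (T : LinearMap.range (strongDualTensorHom 𝕜 E E))
    (hAT : A * T ∈ LinearMap.range (strongDualTensorHom 𝕜 E E)) :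
    splitting φ u ⟨A * T, hAT⟩ =
      TensorProduct.map (LinearMap.mulLeft 𝕜 A) LinearMap.id (splitting φ u T) := by
  obtain ⟨_, t, rfl⟩ := T
  rw [splitting_apply φ u ⟨_, t, rfl⟩ t rfl, ← splitTensor_lTensor]
  exact splitting_apply φ u _ _ (comp_strongDualTensorHom A t).symm

lemma splitting_mul_right (A : E →L[𝕜] E) (T : LinearMap.range (strongDualTensorHom 𝕜 E E))
    (hTA : T * A ∈ LinearMap.range (strongDualTensorHom 𝕜 E E)) :
    splitting φ u ⟨T * A, hTA⟩ =
      TensorProduct.map LinearMap.id (LinearMap.mulRight 𝕜 A) (splitting φ u T) := by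
  obtain ⟨_, t, rfl⟩ := T
  rw [splitting_apply φ u ⟨_, t, rfl⟩ t rfl, ← splitTensor_rTensor]
  exact splitting_apply φ u _ _ (strongDualTensorHom_comp A t).symm

end Splitting

end ContinuousLinearMap

namespace lp

variable {𝕜 ι X : Type*} [NontriviallyNormedField 𝕜] [DecidableEq ι]
  [NormedAddCommGroup X] [NormedSpace 𝕜 X] (p : ℝ≥0∞) [Fact (1 ≤ p)]

noncomputable def elementary (i j : ι) (x : X) (f : StrongDual 𝕜 X) :
    lp (fun _ : ι ↦ X) p →L[𝕜] lp (fun _ : ι ↦ X) p :=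
  (f ∘L evalCLM 𝕜 (fun _ ↦ X) p j).smulRight (lp.single p i x)

lemma elementary_apply (i j : ι) (x : X) (f : StrongDual 𝕜 X) (ξ : lp (fun _ : ι ↦ X) p)
    (m : ι) : elementary p i j x f ξ m = if m = i then f (ξ j) • x else 0 := by
  simp [elementary, evalCLM, lp.single_apply, Pi.single_apply]

lemma elementary_eq_strongDualTensorHom (i j : ι) (x : X) (f : StrongDual 𝕜 X) :
    elementary p i j x f = ContinuousLinearMap.strongDualTensorHom 𝕜 _ _
      ((f ∘L evalCLM 𝕜 (fun _ ↦ X) p j) ⊗ₜ lp.single p i x) := rfl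

end lp

theorem splitting_of_multiplication_for_elementary_operators_general
    {X : Type*} [NormedAddCommGroup X] [NormedSpace ℂ X]
    (p : ℝ≥0∞) [Fact (1 ≤ p)]
    (E : ℕ → ℕ → X → (X →L[ℂ] ℂ) →
      (lp (fun _ : ℕ => X) p →L[ℂ] lp (fun _ : ℕ => X) p))
    (hE : ∀ (i j : ℕ) (x : X) (f : X →L[ℂ] ℂ) (ξ : lp (fun _ : ℕ => X) p) (m : ℕ),
      (E i j x f ξ) m = if m = i then f (ξ j) • x else 0)
    (e : X) (estar : X →L[ℂ] ℂ) (he : estar e = 1) :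
    let B := lp (fun _ : ℕ => X) p →L[ℂ] lp (fun _ : ℕ => X) p
    let Ainf : Submodule ℂ B :=
      Submodule.span ℂ {T : B | ∃ i j x f, T = E i j x f}
    ∃ s : Ainf →ₗ[ℂ] (B ⊗[ℂ] B),
      -- the defining formula on the generators
      (∀ (i j : ℕ) (x : X) (f : X →L[ℂ] ℂ) (h : E i j x f ∈ Ainf),
        s ⟨E i j x f, h⟩ = (E i 0 x estar) ⊗ₜ[ℂ] (E 0 j e f)) ∧
      -- μ ∘ s = id
      (∀ a : Ainf, LinearMap.mul' ℂ B (s a) = (a : B)) ∧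
      -- s is a bimodule homomorphism: s(ab) = s(a)·b = a·s(b)
      (∀ (a b : Ainf) (hab : (a : B) * (b : B) ∈ Ainf),
        s ⟨(a : B) * (b : B), hab⟩ =
          TensorProduct.map (LinearMap.mulLeft ℂ (a : B)) LinearMap.id (s b) ∧
        s ⟨(a : B) * (b : B), hab⟩ =
          TensorProduct.map LinearMap.id (LinearMap.mulRight ℂ (b : B)) (s a)) := by
  intro B Ainf
  obtain rfl : E = lp.elementary p := by
    ext i j x f ξ m
    rw [hE, lp.elementary_apply]
  have hAinf : Ainf ≤ LinearMap.range (ContinuousLinearMap.strongDualTensorHom ℂ _ _) :=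
    Submodule.span_le.mpr fun _ ⟨i, j, x, f, hT⟩ ↦
      ⟨_, (hT.trans (lp.elementary_eq_strongDualTensorHom p i j x f)).symm⟩
  let φ := estar ∘L lp.evalCLM ℂ (fun _ ↦ X) p 0
  let u := lp.single (E := fun _ ↦ X) p 0 e
  have hφu : φ u = 1 := by simp [φ, u, lp.evalCLM, he]
  refine ⟨ContinuousLinearMap.splitting φ u ∘ₗ Submodule.inclusion hAinf, ?_, ?_, ?_⟩
  · intro i j x f h
    exact ContinuousLinearMap.splitting_apply φ u (Submodule.inclusion hAinf ⟨_, h⟩) _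
      (lp.elementary_eq_strongDualTensorHom p i j x f).symm
  · intro a
    simpa [hφu] using ContinuousLinearMap.mul'_splitting φ u (Submodule.inclusion hAinf a)
  · intro a b hab
    exact ⟨ContinuousLinearMap.splitting_mul_left φ u a (Submodule.inclusion hAinf b) _,
      ContinuousLinearMap.splitting_mul_right φ u b (Submodule.inclusion hAinf a) _⟩

theorem splitting_of_multiplication_for_elementary_operators
    {X : Type*} [NormedAddCommGroup X] [NormedSpace ℂ X]
    (p : ℝ≥0∞) [Fact (1 ≤ p)] (hp : p ≠ ∞)
    (E : ℕ → ℕ → X → (X →L[ℂ] ℂ) →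
      (lp (fun _ : ℕ => X) p →L[ℂ] lp (fun _ : ℕ => X) p))
    (hE : ∀ (i j : ℕ) (x : X) (f : X →L[ℂ] ℂ) (ξ : lp (fun _ : ℕ => X) p) (m : ℕ),
      (E i j x f ξ) m = if m = i then f (ξ j) • x else 0)
    (e : X) (estar : X →L[ℂ] ℂ) (he : estar e = 1) :
    let B := lp (fun _ : ℕ => X) p →L[ℂ] lp (fun _ : ℕ => X) p
    let Ainf : Submodule ℂ B :=
      Submodule.span ℂ {T : B | ∃ i j x f, T = E i j x f}
    ∃ s : Ainf →ₗ[ℂ] (B ⊗[ℂ] B),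
      -- the defining formula on the generators
      (∀ (i j : ℕ) (x : X) (f : X →L[ℂ] ℂ) (h : E i j x f ∈ Ainf),
        s ⟨E i j x f, h⟩ = (E i 0 x estar) ⊗ₜ[ℂ] (E 0 j e f)) ∧
      -- μ ∘ s = id
      (∀ a : Ainf, LinearMap.mul' ℂ B (s a) = (a : B)) ∧
      -- s is a bimodule homomorphism: s(ab) = s(a)·b = a·s(b)
      (∀ (a b : Ainf) (hab : (a : B) * (b : B) ∈ Ainf),
        s ⟨(a : B) * (b : B), hab⟩ =
          TensorProduct.map (LinearMap.mulLeft ℂ (a : B)) LinearMap.id (s b) ∧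
        s ⟨(a : B) * (b : B), hab⟩ =
          TensorProduct.map LinearMap.id (LinearMap.mulRight ℂ (b : B)) (s a)) :=
  splitting_of_multiplication_for_elementary_operators_general p E hE e estar he
end

section
/- Let 𝔄 be a Banach algebra, Cₖ ⊆ Cₖ₊₁ ⊆ ⋯ an increasing family of closed subspaces with dense union A_∞ = ⋃ₖ 𝔄ₖ ∩ A (A a dense subalgebra), and suppose D is a bounded (n+1)-linear functional on 𝔄 with δ-cocycle property, such that there exist κ > 0 and for each k a bounded n-linear functional ψₖ with ‖ψₖ‖ ≤ κ and D(a₀⊗⋯⊗aₙ) = ψₖ(δ(a₀⊗⋯⊗aₙ)) for all a₀,…,aₙ ∈ Aₖ. Define ψ(a₀⊗⋯⊗a_{n−1}) = LIMₖ ψₖ(a₀⊗⋯⊗a_{n−1}) for a₀,…,a_{n−1} ∈ A_∞ (well-defined since each tuple lies in Aₖ for large k). Then ψ is a bounded n-linear functional with ‖ψ‖ ≤ κ, it extends boundedly to 𝔄, and D = ∂ψ, i.e., D is a bounded Hochschild coboundary. -/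
/-!
Put `Ψ := LIM ∘ Φ`, where `Φ a := (ψₖ a)ₖ ∈ ℓ∞`; then `‖Ψ‖ ≤ ‖LIM‖ κ = κ`. Since `LIM` is linear,
`(∂Ψ)(a) = LIM ((∂ψₖ)(a))ₖ`. If every entry of `a` lies in `A_∞`, then, the chain being
increasing, all of them lie in `Aₖ` for large `k`, so `((∂ψₖ)(a))ₖ` is eventually the constant
`D a`, and `LIM` returns `D a`. Both `D` and `∂Ψ` are continuous and `A_∞` is dense, so
`D = ∂Ψ` everywhere.
-/

open Filter
open scoped ENNReal

def dLast {A : Type*} [Mul A] {n : ℕ} (a : Fin (n + 2) → A) : Fin (n + 1) → A :=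
  fun j => if (j : ℕ) = 0 then a (Fin.last (n + 1)) * a 0 else a (Fin.castSucc j)

section Coboundary

variable (R : Type*) {A M N : Type*} [Ring R] [Mul A] [AddCommGroup M] [Module R M]
  [AddCommGroup N] [Module R N]

def hochschildCoboundary {n : ℕ} (Ψ : (Fin (n + 1) → A) → M) (a : Fin (n + 2) → A) : M :=
  (∑ i ∈ Finset.range (n + 1), ((-1 : R) ^ i) • Ψ (dFace i a)) + ((-1 : R) ^ (n + 1)) • Ψ (dLast a)

theorem LinearMap.map_hochschildCoboundary {n : ℕ} (L : M →ₗ[R] N) (Ψ : (Fin (n + 1) → A) → M)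
    (a : Fin (n + 2) → A) :
    L (hochschildCoboundary R Ψ a) = hochschildCoboundary R (L ∘ Ψ) a := by
  simp only [hochschildCoboundary, map_add, map_sum, map_smul, Function.comp_apply]

theorem continuous_dFace [TopologicalSpace A] [ContinuousMul A] {n : ℕ} (i : ℕ) :
    Continuous (dFace (n := n) i : (Fin (n + 2) → A) → Fin (n + 1) → A) := by
  refine continuous_pi fun j => ?_
  unfold dFace
  split_ifs <;> fun_prop

theorem continuous_dLast [TopologicalSpace A] [ContinuousMul A] {n : ℕ} :
    Continuous (dLast (n := n) : (Fin (n + 2) → A) → Fin (n + 1) → A) := by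
  refine continuous_pi fun j => ?_
  unfold dLast
  split_ifs <;> fun_prop

theorem Continuous.hochschildCoboundary [TopologicalSpace A] [ContinuousMul A] [TopologicalSpace M]
    [IsTopologicalAddGroup M] [ContinuousConstSMul R M] {n : ℕ} {Ψ : (Fin (n + 1) → A) → M}
    (hΨ : Continuous Ψ) : Continuous (hochschildCoboundary R Ψ) := by
  unfold _root_.hochschildCoboundary
  exact (continuous_finsetSum _ fun i _ => ((hΨ.comp (continuous_dFace i)).const_smul _)).add
    ((hΨ.comp continuous_dLast).const_smul _)

end Coboundary

section SeqToLpInfty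

variable {𝕜 : Type*} [NontriviallyNormedField 𝕜] {ι : Type*} [Fintype ι] {E : ι → Type*}
  [∀ i, SeminormedAddCommGroup (E i)] [∀ i, NormedSpace 𝕜 (E i)]
  {G : Type*} [NormedAddCommGroup G] [NormedSpace 𝕜 G]

theorem ContinuousMultilinearMap.memℓp_infty_apply {f : ℕ → ContinuousMultilinearMap 𝕜 E G}
    {C : ℝ} (hf : ∀ k, ‖f k‖ ≤ C) (a : ∀ i, E i) : Memℓp (fun k => f k a) ∞ :=
  memℓp_infty ⟨C * ∏ i, ‖a i‖, by
    rintro _ ⟨k, rfl⟩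
    exact (f k).le_of_opNorm_le (hf k) a⟩

noncomputable def ContinuousMultilinearMap.seqToLpInfty (f : ℕ → ContinuousMultilinearMap 𝕜 E G)
    {C : ℝ} (hf : ∀ k, ‖f k‖ ≤ C) : ContinuousMultilinearMap 𝕜 E (lp (fun _ : ℕ => G) ∞) :=
  MultilinearMap.mkContinuous
    { toFun := fun a => ⟨fun k => f k a, memℓp_infty_apply hf a⟩
      map_update_add' := fun a i u v => lp.ext <| funext fun k => (f k).map_update_add a i u v
      map_update_smul' := fun a i c u => lp.ext <| funext fun k => (f k).map_update_smul a i c u }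
    C fun a => lp.norm_le_of_forall_le
      (mul_nonneg ((norm_nonneg _).trans (hf 0)) (by positivity))
      fun k => (f k).le_of_opNorm_le (hf k) a

theorem ContinuousMultilinearMap.norm_seqToLpInfty_le {f : ℕ → ContinuousMultilinearMap 𝕜 E G}
    {C : ℝ} (hf : ∀ k, ‖f k‖ ≤ C) : ‖seqToLpInfty f hf‖ ≤ C :=
  MultilinearMap.mkContinuous_norm_le _ ((norm_nonneg _).trans (hf 0)) _

end SeqToLpInfty

theorem Monotone.eventually_forall_mem_of_forall_mem_iUnion {α ι : Type*} [Finite ι]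
    {s : ℕ → Set α} (hs : Monotone s) {a : ι → α} (ha : ∀ i, a i ∈ ⋃ k, s k) :
    ∀ᶠ k in atTop, ∀ i, a i ∈ s k :=
  eventually_all.2 fun i =>
    let ⟨k, hk⟩ := Set.mem_iUnion.1 (ha i)
    eventually_atTop.2 ⟨k, fun _ hj => hs hj hk⟩

theorem bounded_coboundary_of_uniformly_generated_general
    {𝔄 : Type*} [NonUnitalNormedRing 𝔄] [NormedSpace ℂ 𝔄]
    (m : ℕ)
    -- the increasing chain Aₖ with dense union A_∞
    (Ak : ℕ → NonUnitalSubalgebra ℂ 𝔄)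
    (hmono : Monotone fun k => (Ak k : Set 𝔄))
    (hdense : Dense (⋃ k, (Ak k : Set 𝔄)))
    -- a Banach limit
    (LIM : lp (fun _ : ℕ => ℂ) ∞ →L[ℂ] ℂ)
    (hLIMnorm : ‖LIM‖ = 1)
    (hLIMlim : ∀ (x : lp (fun _ : ℕ => ℂ) ∞) (l : ℂ),
      Tendsto (fun k => x k) atTop (nhds l) → LIM x = l)
    (D : ContinuousMultilinearMap ℂ (fun _ : Fin (m + 2) => 𝔄) ℂ)
    -- the uniformly bounded generating functionals ψₖ
    (κ : ℝ)
    (ψ : ℕ → ContinuousMultilinearMap ℂ (fun _ : Fin (m + 1) => 𝔄) ℂ)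
    (hψnorm : ∀ k, ‖ψ k‖ ≤ κ)
    -- D = ψₖ ∘ δ on Aₖ
    (hψ : ∀ (k : ℕ) (a : Fin (m + 2) → 𝔄), (∀ i, a i ∈ Ak k) →
      D a = (∑ i ∈ Finset.range (m + 1), ((-1 : ℂ) ^ i) • ψ k (dFace i a))
        + ((-1 : ℂ) ^ (m + 1)) • ψ k (dLast a)) :
    ∃ Ψ : ContinuousMultilinearMap ℂ (fun _ : Fin (m + 1) => 𝔄) ℂ,
      ‖Ψ‖ ≤ κ ∧
      -- Ψ is given on A_∞ by the Banach limit of the ψₖ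
      (∀ a : Fin (m + 1) → 𝔄, (∀ i, a i ∈ ⋃ k, (Ak k : Set 𝔄)) →
        ∀ x : lp (fun _ : ℕ => ℂ) ∞, (∀ k, x k = ψ k a) → Ψ a = LIM x) ∧
      -- D = ∂Ψ is a bounded Hochschild coboundary
      (∀ a : Fin (m + 2) → 𝔄,
        D a = (∑ i ∈ Finset.range (m + 1), ((-1 : ℂ) ^ i) • Ψ (dFace i a))
          + ((-1 : ℂ) ^ (m + 1)) • Ψ (dLast a)) := by
  set Φ := ContinuousMultilinearMap.seqToLpInfty ψ hψnorm
  refine ⟨LIM.compContinuousMultilinearMap Φ, ?_, fun a _ x hx => ?_, ?_⟩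
  · calc _ ≤ ‖LIM‖ * ‖Φ‖ := LIM.norm_compContinuousMultilinearMap_le Φ
      _ ≤ κ := by rw [hLIMnorm, one_mul]; exact ContinuousMultilinearMap.norm_seqToLpInfty_le hψnorm
  · exact congrArg LIM (lp.ext (funext fun k => (hx k).symm))
  · have hdense_pi : Dense (Set.univ.pi fun _ : Fin (m + 2) => ⋃ k, (Ak k : Set 𝔄)) :=
      dense_pi _ fun _ _ => hdense
    have hD_eqOn : Set.EqOn D (hochschildCoboundary ℂ (LIM.compContinuousMultilinearMap Φ))
        (Set.univ.pi fun _ => ⋃ k, (Ak k : Set 𝔄)) := fun a ha => by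
      have hΦ_eventually : ∀ᶠ k in atTop, D a = hochschildCoboundary ℂ Φ a k :=
        (hmono.eventually_forall_mem_of_forall_mem_iUnion (Set.mem_univ_pi.1 ha)).mono
          fun k hk => (hψ k a hk).trans ((lp.evalₗ _ ∞ k).map_hochschildCoboundary ℂ Φ a).symm
      exact (hLIMlim _ _ (tendsto_const_nhds.congr' hΦ_eventually)).symm.trans
        (LIM.toLinearMap.map_hochschildCoboundary ℂ Φ a)
    exact congrFun (D.cont.ext_on hdense_pi (Continuous.hochschildCoboundary ℂ
      (LIM.compContinuousMultilinearMap Φ).cont) hD_eqOn)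

theorem bounded_coboundary_of_uniformly_generated
    {𝔄 : Type*} [NonUnitalNormedRing 𝔄] [NormedSpace ℂ 𝔄]
    [IsScalarTower ℂ 𝔄 𝔄] [SMulCommClass ℂ 𝔄 𝔄] [CompleteSpace 𝔄]
    (m : ℕ)
    -- the increasing chain Aₖ with dense union A_∞
    (Ak : ℕ → NonUnitalSubalgebra ℂ 𝔄)
    (hmono : Monotone fun k => (Ak k : Set 𝔄))
    (hdense : Dense (⋃ k, (Ak k : Set 𝔄)))
    -- a Banach limit
    (LIM : lp (fun _ : ℕ => ℂ) ∞ →L[ℂ] ℂ)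
    (hLIMnorm : ‖LIM‖ = 1)
    (hLIMlim : ∀ (x : lp (fun _ : ℕ => ℂ) ∞) (l : ℂ),
      Tendsto (fun k => x k) atTop (nhds l) → LIM x = l)
    -- D is a bounded (m+2)-linear functional which is a Hochschild cocycle (∂D = 0)
    (D : ContinuousMultilinearMap ℂ (fun _ : Fin (m + 2) => 𝔄) ℂ)
    (hcocycle : ∀ a : Fin (m + 3) → 𝔄,
      (∑ i ∈ Finset.range (m + 2), ((-1 : ℂ) ^ i) • D (dFace i a))
        + ((-1 : ℂ) ^ (m + 2)) • D (dLast a) = 0)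
    -- the uniformly bounded generating functionals ψₖ
    (κ : ℝ) (hκ : 0 < κ)
    (ψ : ℕ → ContinuousMultilinearMap ℂ (fun _ : Fin (m + 1) => 𝔄) ℂ)
    (hψnorm : ∀ k, ‖ψ k‖ ≤ κ)
    -- D = ψₖ ∘ δ on Aₖ
    (hψ : ∀ (k : ℕ) (a : Fin (m + 2) → 𝔄), (∀ i, a i ∈ Ak k) →
      D a = (∑ i ∈ Finset.range (m + 1), ((-1 : ℂ) ^ i) • ψ k (dFace i a))
        + ((-1 : ℂ) ^ (m + 1)) • ψ k (dLast a)) :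
    ∃ Ψ : ContinuousMultilinearMap ℂ (fun _ : Fin (m + 1) => 𝔄) ℂ,
      ‖Ψ‖ ≤ κ ∧
      -- Ψ is given on A_∞ by the Banach limit of the ψₖ
      (∀ a : Fin (m + 1) → 𝔄, (∀ i, a i ∈ ⋃ k, (Ak k : Set 𝔄)) →
        ∀ x : lp (fun _ : ℕ => ℂ) ∞, (∀ k, x k = ψ k a) → Ψ a = LIM x) ∧
      -- D = ∂Ψ is a bounded Hochschild coboundary
      (∀ a : Fin (m + 2) → 𝔄,
        D a = (∑ i ∈ Finset.range (m + 1), ((-1 : ℂ) ^ i) • Ψ (dFace i a))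
          + ((-1 : ℂ) ^ (m + 1)) • Ψ (dLast a)) :=
  bounded_coboundary_of_uniformly_generated_general m Ak hmono hdense LIM hLIMnorm hLIMlim D κ ψ
    hψnorm hψ
end
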